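/- The eigenvalues of the 4×4 complex matrix L(s) from the dephasing Deutsch-Jozsa model (with ω = 1 and q(s)² + r(s)² = 1) are exactly {0, −2λ², −λ² − √(λ⁴−1), −λ² + √(λ⁴−1)}, where √(λ⁴−1) denotes a complex square root of λ⁴ − 1. -/
import Mathlib


open Matrix

theorem dephasing_dj_spectrum (lam : ℝ) (q r : ℝ) (hqr : q ^ 2 + r ^ 2 = 1)
    (c : ℂ) (hc : c ^ 2 = (lam : ℂ) ^ 4 - 1) :
    spectrum ℂ
      (!![0, 0, 0, 0;
          0, -2 * (lam : ℂ) ^ 2, 0, (q : ℂ);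
          0, 0, -2 * (lam : ℂ) ^ 2, -(r : ℂ);
          0, -(q : ℂ), (r : ℂ), 0] : Matrix (Fin 4) (Fin 4) ℂ) =
    {0, -2 * (lam : ℂ) ^ 2, -(lam : ℂ) ^ 2 - c, -(lam : ℂ) ^ 2 + c} := by
  have key : ∀ x : ℂ, x ∈ spectrum ℂ
      (!![0, 0, 0, 0;
          0, -2 * (lam : ℂ) ^ 2, 0, (q : ℂ);
          0, 0, -2 * (lam : ℂ) ^ 2, -(r : ℂ);
          0, -(q : ℂ), (r : ℂ), 0] : Matrix (Fin 4) (Fin 4) ℂ) ↔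
      x * (x + 2*(lam:ℂ)^2) * ((x + (lam:ℂ)^2 - c) * (x + (lam:ℂ)^2 + c)) = 0 := by
    intro x
    rw [spectrum.mem_iff, Matrix.isUnit_iff_isUnit_det, isUnit_iff_ne_zero, not_ne_iff]
    rw [show (algebraMap ℂ (Matrix (Fin 4) (Fin 4) ℂ)) x = Matrix.scalar (Fin 4) x from rfl]
    have h2 : ((Matrix.scalar (Fin 4)) x - !![0, 0, 0, 0; 0, -2 * (lam:ℂ) ^ 2, 0, (q:ℂ); 0, 0, -2 * (lam:ℂ) ^ 2, -(r:ℂ); 0, -(q:ℂ), (r:ℂ), 0]).det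
        = x * (x + 2*(lam:ℂ)^2) * ((x + (lam:ℂ)^2 - c) * (x + (lam:ℂ)^2 + c)) := by
      have h1 : ((Matrix.scalar (Fin 4)) x - !![0, 0, 0, 0; 0, -2 * (lam:ℂ) ^ 2, 0, (q:ℂ); 0, 0, -2 * (lam:ℂ) ^ 2, -(r:ℂ); 0, -(q:ℂ), (r:ℂ), 0])
          = !![x, 0, 0, 0; 0, x + 2 * (lam:ℂ) ^ 2, 0, -(q:ℂ); 0, 0, x + 2 * (lam:ℂ) ^ 2, (r:ℂ); 0, (q:ℂ), -(r:ℂ), x] := by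
        ext i j
        fin_cases i <;> fin_cases j <;>
          simp [Matrix.scalar_apply, Matrix.diagonal_apply, Matrix.vecHead, Matrix.vecTail]
      rw [h1]
      simp [Matrix.det_succ_row_zero, Fin.sum_univ_succ]
      have hqr' : (q:ℂ)^2 + (r:ℂ)^2 = 1 := by
        exact_mod_cast congrArg (Complex.ofReal) hqr
      linear_combination (x * (x + 2*(lam:ℂ)^2)) * hqr' + x * (x + 2*(lam:ℂ)^2) * hc
    rw [h2]
  ext x
  rw [key x]
  simp only [Set.mem_insert_iff, Set.mem_singleton_iff, mul_eq_zero]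
  constructor
  · rintro ((h | h) | (h | h))
    · exact Or.inl h
    · exact Or.inr (Or.inl (by linear_combination h))
    · exact Or.inr (Or.inr (Or.inr (by linear_combination h)))
    · exact Or.inr (Or.inr (Or.inl (by linear_combination h)))
  · rintro (h | h | h | h)
    · exact Or.inl (Or.inl h)
    · exact Or.inl (Or.inr (by linear_combination h))
    · exact Or.inr (Or.inr (by linear_combination h))
    · exact Or.inr (Or.inl (by linear_combination h))
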